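/- arXiv:2603.25957 — 2 statements merged into one kernel-verified Lean document; each statement's English description precedes it below -/
import Mathlib

section
/- Fix γ ∈ (1,2) and Φ_ℓ, Φ_r ∈ ℝ. For each n ≥ 2 let Φ_ss^n be the unique solution of the discrete stationary equation and μ_ss^n the associated Gaussian product measure on ℝ^{Λ_n}. Then limsup_{A→∞} limsup_{n→∞} (1/n) log μ_ss^n( { φ ∈ ℝ^{Λ_n} : (1/(n−1)) ∑_{x∈Λ_n} |φ(x)| ≥ A } ) = −∞. -/
open MeasureTheory Filter ENNReal NNReal

noncomputable section
open ProbabilityTheory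

/-- The normalizing constant `c_γ = (∑_{z∈ℤ, z≠0} |z|^{-(1+γ)})⁻¹`. -/
def cGamma (γ : ℝ) : ℝ := (∑' z : ℤ, if z = 0 then (0:ℝ) else |(z : ℝ)| ^ (-(1 + γ)))⁻¹

/-- The long-range kernel `p(z) = c_γ |z|^{-(1+γ)}` for `z ≠ 0`, `p(0) = 0`. -/
def pker (γ : ℝ) (z : ℝ) : ℝ := if z = 0 then 0 else cGamma γ * |z| ^ (-(1 + γ))

/-- The discrete lattice `Λ_n = {1, …, n−1}`. -/
abbrev Lam (n : ℕ) : Finset ℕ := Finset.Icc 1 (n - 1)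

/-- The configuration space `ℝ^{Λ_n}`. -/
abbrev Conf (n : ℕ) := (↥(Lam n) → ℝ)

/-- The partial derivative `∂_{φ(k)} f` (with value `0` for `k ∉ Λ_n`). -/
def pdN (n : ℕ) (k : ℕ) (f : Conf n → ℝ) (φ : Conf n) : ℝ :=
  if h : k ∈ Lam n then deriv (fun a => f (Function.update φ ⟨k, h⟩ a)) (φ ⟨k, h⟩) else 0

/-- The coordinate `φ(k)` (with value `0` for `k ∉ Λ_n`). -/
def coordN (n : ℕ) (k : ℕ) (φ : Conf n) : ℝ := if h : k ∈ Lam n then φ ⟨k, h⟩ else 0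

/-- The bulk part of the Ginzburg–Landau generator. -/
def GLbulk (γ : ℝ) (n : ℕ) (f : Conf n → ℝ) (φ : Conf n) : ℝ :=
  (1/2) * ∑ x ∈ Lam n, ∑ y ∈ Lam n, pker γ ((y : ℝ) - (x : ℝ)) *
    ((coordN n x φ - coordN n y φ) * (pdN n y f φ - pdN n x f φ)
      + (pdN n y (pdN n y f) φ - pdN n y (pdN n x f) φ
          - pdN n x (pdN n y f) φ + pdN n x (pdN n x f) φ))

/-- The left boundary part of the Ginzburg–Landau generator. -/
def GLleft (Φl : ℝ) (n : ℕ) (f : Conf n → ℝ) (φ : Conf n) : ℝ :=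
  pdN n 1 (pdN n 1 f) φ + (Φl - coordN n 1 φ) * pdN n 1 f φ

/-- The right boundary part of the Ginzburg–Landau generator. -/
def GLright (Φr : ℝ) (n : ℕ) (f : Conf n → ℝ) (φ : Conf n) : ℝ :=
  pdN n (n - 1) (pdN n (n - 1) f) φ + (Φr - coordN n (n - 1) φ) * pdN n (n - 1) f φ

/-- The boundary-driven long-range Ginzburg–Landau generator
`𝓛_n = n^γ (𝓛^ℓ + 𝓛^r + 𝓛^{bulk})`. -/
def GLgen (γ Φl Φr : ℝ) (n : ℕ) (f : Conf n → ℝ) (φ : Conf n) : ℝ :=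
  (n : ℝ) ^ γ * (GLleft Φl n f φ + GLright Φr n f φ + GLbulk γ n f φ)

/-- The Gaussian product measure on `ℝ^{Λ_n}` with unit variances and mean `m x` at
coordinate `x`. -/
def gaussianProduct (n : ℕ) (m : ℕ → ℝ) : Measure (Conf n) :=
  Measure.pi fun x => ProbabilityTheory.gaussianReal (m (x : ℕ)) 1

/-- The discrete stationary equation for the profile `ψ` on `Λ_n = {1, …, n−1}`. -/
def IsDiscreteProfile (γ Φl Φr : ℝ) (n : ℕ) (ψ : ℕ → ℝ) : Prop :=
  ∀ x ∈ Lam n,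
    (∑ y ∈ Lam n, pker γ ((y : ℝ) - (x : ℝ)) * (ψ y - ψ x))
      + (if x = 1 then Φl - ψ 1 else 0) + (if x = n - 1 then Φr - ψ (n - 1) else 0) = 0

lemma gauss_shift (m t x : ℝ) :
    gaussianPDFReal m 1 x * Real.exp (t * x)
      = Real.exp (t * m + t ^ 2 / 2) * gaussianPDFReal (m + t) 1 x := by
  simp only [gaussianPDFReal, NNReal.coe_one, mul_one]
  rw [mul_assoc, ← Real.exp_add, mul_left_comm, ← Real.exp_add]
  congr 1
  ring

lemma gauss_density (m : ℝ) :
    gaussianReal m 1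
      = MeasureTheory.volume.withDensity
          fun x => ((Real.toNNReal (gaussianPDFReal m 1 x) : ℝ≥0) : ℝ≥0∞) := by
  rw [gaussianReal_of_var_ne_zero m one_ne_zero]; rfl

lemma integrable_exp_mul_gauss (m t : ℝ) :
    MeasureTheory.Integrable (fun x => Real.exp (t * x)) (gaussianReal m 1) := by
  rw [gauss_density m,
    MeasureTheory.integrable_withDensity_iff_integrable_smul
      ((measurable_gaussianPDFReal m 1).real_toNNReal)]
  have h : (fun x => (Real.toNNReal (gaussianPDFReal m 1 x) : ℝ≥0) • Real.exp (t * x))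
      = fun x => Real.exp (t * m + t ^ 2 / 2) * gaussianPDFReal (m + t) 1 x := by
    funext x
    rw [NNReal.smul_def, smul_eq_mul, Real.coe_toNNReal _ (gaussianPDFReal_nonneg m 1 x),
      gauss_shift]
  rw [h]
  exact (integrable_gaussianPDFReal (m + t) 1).const_mul _

lemma integral_exp_mul_gauss (m t : ℝ) :
    ∫ x, Real.exp (t * x) ∂(gaussianReal m 1) = Real.exp (t * m + t ^ 2 / 2) := by
  rw [gauss_density m,
    integral_withDensity_eq_integral_smul
      ((measurable_gaussianPDFReal m 1).real_toNNReal)]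
  have h : (fun x => (Real.toNNReal (gaussianPDFReal m 1 x) : ℝ≥0) • Real.exp (t * x))
      = fun x => Real.exp (t * m + t ^ 2 / 2) * gaussianPDFReal (m + t) 1 x := by
    funext x
    rw [NNReal.smul_def, smul_eq_mul, Real.coe_toNNReal _ (gaussianPDFReal_nonneg m 1 x),
      gauss_shift]
  rw [h, integral_const_mul, integral_gaussianPDFReal_eq_one (m + t) one_ne_zero,
    mul_one]

lemma exp_abs_le (x : ℝ) : Real.exp |x| ≤ Real.exp (1 * x) + Real.exp (-1 * x) := by
  rw [one_mul, neg_one_mul]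
  rcases abs_choice x with h | h <;> rw [h] <;>
    linarith [Real.exp_pos x, Real.exp_pos (-x)]

lemma integrable_exp_abs_gauss (m : ℝ) :
    MeasureTheory.Integrable (fun x => Real.exp |x|) (gaussianReal m 1) := by
  refine MeasureTheory.Integrable.mono'
    ((integrable_exp_mul_gauss m 1).add (integrable_exp_mul_gauss m (-1)))
    ((Real.continuous_exp.comp continuous_abs).aestronglyMeasurable)
    (MeasureTheory.ae_of_all _ fun x => ?_)
  rw [Real.norm_eq_abs, Real.abs_exp]
  exact exp_abs_le x

lemma integral_exp_abs_gauss_le (m M : ℝ) (hm : |m| ≤ M) :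
    ∫ x, Real.exp |x| ∂(gaussianReal m 1) ≤ 2 * Real.exp (M + 1/2) := by
  have h1 := integrable_exp_mul_gauss m 1
  have h2 := integrable_exp_mul_gauss m (-1)
  have hle : ∫ x, Real.exp |x| ∂(gaussianReal m 1)
      ≤ ∫ x, (Real.exp (1 * x) + Real.exp (-1 * x)) ∂(gaussianReal m 1) :=
    MeasureTheory.integral_mono (integrable_exp_abs_gauss m) (h1.add h2) fun x => exp_abs_le x
  rw [MeasureTheory.integral_add h1 h2, integral_exp_mul_gauss, integral_exp_mul_gauss] at hle
  have hb := abs_le.mp hm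
  have e1 : Real.exp (1 * m + 1 ^ 2 / 2) ≤ Real.exp (M + 1/2) :=
    Real.exp_le_exp.mpr (by nlinarith [hb.2])
  have e2 : Real.exp (-1 * m + (-1) ^ 2 / 2) ≤ Real.exp (M + 1/2) :=
    Real.exp_le_exp.mpr (by nlinarith [hb.1])
  linarith

lemma gauss_Ici_ne_zero (m B : ℝ) : gaussianReal m 1 (Set.Ici B) ≠ 0 := by
  rw [gaussianReal_apply_eq_integral m one_ne_zero]
  refine (ENNReal.ofReal_pos.mpr ?_).ne'
  have hsupp : Function.support (gaussianPDFReal m 1) = Set.univ :=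
    Set.eq_univ_of_forall fun x => (gaussianPDFReal_pos m 1 x one_ne_zero).ne'
  rw [MeasureTheory.setIntegral_pos_iff_support_of_nonneg_ae
      (MeasureTheory.ae_of_all _ fun x => gaussianPDFReal_nonneg m 1 x)
      ((integrable_gaussianPDFReal m 1).restrict)]
  rw [hsupp, Set.univ_inter]
  simp [Real.volume_Ici]


lemma cGamma_pos {γ : ℝ} (hγ : 1 < γ) : 0 < cGamma γ := by
  have hne : -(1 + γ) ≠ 0 := by intro h; nlinarith [h]
  have hsum : Summable (fun z : ℤ => if z = 0 then (0:ℝ) else |(z:ℝ)| ^ (-(1+γ))) := by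
    refine (Real.summable_abs_int_rpow (by linarith : 1 < 1 + γ)).congr fun z => ?_
    by_cases hz : z = 0
    · subst hz
      rw [if_pos rfl, Int.cast_zero, abs_zero, Real.zero_rpow hne]
    · simp [hz]
  rw [cGamma]
  refine inv_pos.mpr (Summable.tsum_pos hsum (fun z => ?_) 1 ?_)
  · by_cases hz : z = 0
    · simp [hz]
    · simp only [hz, if_false]
      positivity
  · norm_num

lemma pker_nonneg {γ : ℝ} (hγ : 1 < γ) (z : ℝ) : 0 ≤ pker γ z := by
  rw [pker]; split
  · exact le_refl _
  · exact mul_nonneg (cGamma_pos hγ).le (Real.rpow_nonneg (abs_nonneg _) _)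

lemma pker_pos {γ : ℝ} (hγ : 1 < γ) {z : ℝ} (hz : z ≠ 0) : 0 < pker γ z := by
  rw [pker, if_neg hz]
  exact mul_pos (cGamma_pos hγ) (Real.rpow_pos_of_pos (abs_pos.mpr hz) _)

lemma profile_le {γ Φl Φr : ℝ} (hγ : 1 < γ) {n : ℕ} (hn : 2 ≤ n) {ψ : ℕ → ℝ}
    (h : IsDiscreteProfile γ Φl Φr n ψ) : ∀ x ∈ Lam n, ψ x ≤ max Φl Φr := by
  have h1mem : 1 ∈ Lam n := by simp only [Lam, Finset.mem_Icc]; omega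
  obtain ⟨b, hb, hbmax⟩ := Finset.exists_max_image (Lam n) ψ ⟨1, h1mem⟩
  suffices hM : ψ b ≤ max Φl Φr by
    intro x hx; exact le_trans (hbmax x hx) hM
  by_contra hMgt
  push_neg at hMgt
  have hterm : ∀ x ∈ Lam n, ψ x = ψ b → ∀ y ∈ Lam n,
      pker γ ((y:ℝ) - (x:ℝ)) * (ψ y - ψ x) ≤ 0 := by
    intro x hx hxM y hy
    have : ψ y - ψ x ≤ 0 := by rw [hxM]; linarith [hbmax y hy]
    exact mul_nonpos_iff.mpr (Or.inl ⟨pker_nonneg hγ _, this⟩)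
  have hsum : ∀ x ∈ Lam n, ψ x = ψ b →
      ∑ y ∈ Lam n, pker γ ((y:ℝ) - (x:ℝ)) * (ψ y - ψ x) ≤ 0 :=
    fun x hx hxM => Finset.sum_nonpos (hterm x hx hxM)
  have hΦl : Φl < ψ b := lt_of_le_of_lt (le_max_left _ _) hMgt
  have hΦr : Φr < ψ b := lt_of_le_of_lt (le_max_right _ _) hMgt
  have hcase1 : ψ 1 ≠ ψ b := by
    intro h1M
    have heq := h 1 h1mem
    rw [if_pos rfl] at heq
    have hb2 : (if 1 = n - 1 then Φr - ψ (n-1) else 0) ≤ 0 := by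
      split
      · next h1n => rw [← h1n, h1M]; linarith
      · exact le_refl _
    have hs := hsum 1 h1mem h1M
    rw [h1M] at heq hs
    linarith
  have hcasen : ψ (n-1) ≠ ψ b := by
    intro hnM
    have hnmem : n - 1 ∈ Lam n := by simp only [Lam, Finset.mem_Icc]; omega
    have heq := h (n-1) hnmem
    rw [if_pos rfl] at heq
    have hb1 : (if n - 1 = 1 then Φl - ψ 1 else 0) ≤ 0 := by
      split
      · next h1n => rw [show ψ 1 = ψ (n-1) from by rw [h1n], hnM]; linarith
      · exact le_refl _
    have hs := hsum (n-1) hnmem hnM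
    rw [hnM] at heq hs
    linarith
  have hbne1 : b ≠ 1 := fun hb1 => hcase1 (by rw [hb1])
  have hbnen : b ≠ n - 1 := fun hbn => hcasen (by rw [hbn])
  have heq := h b hb
  rw [if_neg hbne1, if_neg hbnen, add_zero, add_zero] at heq
  have hall := (Finset.sum_eq_zero_iff_of_nonpos (hterm b hb rfl)).mp heq 1 h1mem
  have hbge : 2 ≤ b := by
    have h1b := (Finset.mem_Icc.mp hb).1; omega
  have hzne : ((1:ℕ):ℝ) - (b:ℝ) ≠ 0 := by
    have : (2:ℝ) ≤ (b:ℝ) := by exact_mod_cast hbge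
    push_cast
    intro hc; linarith
  have hpk := pker_pos hγ hzne
  rcases mul_eq_zero.mp hall with h' | h'
  · exact absurd h' hpk.ne'
  · exact hcase1 (by linarith)

lemma IsDiscreteProfile.neg {γ Φl Φr : ℝ} {n : ℕ} {ψ : ℕ → ℝ}
    (h : IsDiscreteProfile γ Φl Φr n ψ) :
    IsDiscreteProfile γ (-Φl) (-Φr) n (fun x => -ψ x) := by
  intro x hx
  have heq := h x hx
  show (∑ y ∈ Lam n, pker γ ((y:ℝ) - (x:ℝ)) * (-ψ y - -ψ x))
      + (if x = 1 then -Φl - -ψ 1 else 0) + (if x = n - 1 then -Φr - -ψ (n-1) else 0) = 0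
  have hsum : ∑ y ∈ Lam n, pker γ ((y:ℝ) - (x:ℝ)) * (-ψ y - -ψ x)
      = -∑ y ∈ Lam n, pker γ ((y:ℝ) - (x:ℝ)) * (ψ y - ψ x) := by
    rw [← Finset.sum_neg_distrib]
    exact Finset.sum_congr rfl fun y _ => by ring
  have h1 : (if x = 1 then -Φl - -ψ 1 else 0) = -(if x = 1 then Φl - ψ 1 else 0) := by
    split <;> ring
  have h2 : (if x = n-1 then -Φr - -ψ (n-1) else 0)
      = -(if x = n-1 then Φr - ψ (n-1) else 0) := by
    split <;> ring
  rw [hsum, h1, h2]; linarith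

lemma profile_abs_le {γ Φl Φr : ℝ} (hγ : 1 < γ) {n : ℕ} (hn : 2 ≤ n) {ψ : ℕ → ℝ}
    (h : IsDiscreteProfile γ Φl Φr n ψ) :
    ∀ x ∈ Lam n, |ψ x| ≤ max |Φl| |Φr| := by
  intro x hx
  rw [abs_le]
  constructor
  · have h2 := profile_le hγ hn h.neg x hx
    have hle : max (-Φl) (-Φr) ≤ max |Φl| |Φr| := max_le_max (neg_le_abs _) (neg_le_abs _)
    linarith
  · exact le_trans (profile_le hγ hn h x hx) (max_le_max (le_abs_self _) (le_abs_self _))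


open ProbabilityTheory in
lemma sum_coord (n : ℕ) (φ : Conf n) :
    ∑ x ∈ Lam n, |coordN n x φ| = ∑ i : ↥(Lam n), |φ i| := by
  rw [← Finset.sum_coe_sort (Lam n) (fun x => |coordN n x φ|)]
  exact Finset.sum_congr rfl fun i _ => by rw [coordN, dif_pos i.2]

open ProbabilityTheory in
lemma prod_integrable_exp_abs (n : ℕ) (m : ℕ → ℝ) :
    Integrable (fun φ : Conf n => ∏ i : ↥(Lam n), Real.exp |φ i|) (gaussianProduct n m) :=
  @MeasureTheory.Integrable.fintype_prod_dep ℝ (↥(Lam n)) _ _ (fun _ => ℝ)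
    (fun _ x => Real.exp |x|) (fun _ => inferInstance) (fun i => gaussianReal (m i) 1)
    (fun i => inferInstanceAs (SigmaFinite (gaussianReal (m i) 1)))
    (fun i => integrable_exp_abs_gauss (m i))

open ProbabilityTheory in
lemma prod_integral_exp_abs (n : ℕ) (m : ℕ → ℝ) :
    ∫ φ : Conf n, ∏ i : ↥(Lam n), Real.exp |φ i| ∂(gaussianProduct n m)
      = ∏ i : ↥(Lam n), ∫ x, Real.exp |x| ∂(gaussianReal (m i) 1) :=
  @MeasureTheory.integral_fintype_prod_eq_prod ℝ (↥(Lam n)) _ _ (fun _ => ℝ)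
    (fun _ x => Real.exp |x|) (fun _ => inferInstance) (fun i => gaussianReal (m i) 1)
    (fun i => inferInstanceAs (SigmaFinite (gaussianReal (m i) 1)))

open ProbabilityTheory in
lemma gaussianProduct_isProb (n : ℕ) (m : ℕ → ℝ) :
    IsProbabilityMeasure (gaussianProduct n m) := by
  unfold gaussianProduct; infer_instance

open ProbabilityTheory in
lemma card_lam (n : ℕ) : (Finset.univ : Finset ↥(Lam n)).card = n - 1 := by
  simp [Finset.card_univ, Fintype.card_coe, Nat.card_Icc]

open ProbabilityTheory in
lemma measure_bound (A : ℝ) (n : ℕ) (hn : 2 ≤ n) (m : ℕ → ℝ) (M : ℝ) (hM0 : 0 ≤ M)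
    (hM : ∀ x ∈ Lam n, |m x| ≤ M) :
    ((gaussianProduct n m)
        {φ : Conf n | A ≤ ((n : ℝ) - 1)⁻¹ * ∑ x ∈ Lam n, |coordN n x φ|}).toReal
      ≤ Real.exp (((n:ℝ) - 1) * (Real.log (2 * Real.exp (M + 1/2)) - A)) := by
  classical
  haveI := gaussianProduct_isProb n m
  set μ := gaussianProduct n m with hμ
  set c := 2 * Real.exp (M + 1/2) with hc
  have hcpos : 0 < c := by positivity
  have hn1 : (1:ℝ) ≤ (n:ℝ) - 1 := by
    have h2 : (2:ℝ) ≤ (n:ℝ) := by exact_mod_cast hn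
    linarith
  set f : Conf n → ℝ := fun φ => ∏ i : ↥(Lam n), Real.exp |φ i| with hf
  have hfnn : ∀ φ, 0 ≤ f φ := fun φ => Finset.prod_nonneg fun i _ => (Real.exp_pos _).le
  have hint : Integrable f μ := prod_integrable_exp_abs n m
  have markov := mul_meas_ge_le_integral_of_nonneg (ae_of_all _ hfnn) hint
    (Real.exp (((n:ℝ)-1) * A))
  have hsub : {φ : Conf n | A ≤ ((n : ℝ) - 1)⁻¹ * ∑ x ∈ Lam n, |coordN n x φ|}
      ⊆ {φ | Real.exp (((n:ℝ)-1)*A) ≤ f φ} := by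
    intro φ hφ
    simp only [Set.mem_setOf_eq] at hφ ⊢
    have h0 : (0:ℝ) < (n:ℝ) - 1 := by linarith
    have hS : ((n:ℝ)-1) * A ≤ ∑ x ∈ Lam n, |coordN n x φ| := by
      calc ((n:ℝ)-1) * A
          ≤ ((n:ℝ)-1) * (((n : ℝ) - 1)⁻¹ * ∑ x ∈ Lam n, |coordN n x φ|) :=
            mul_le_mul_of_nonneg_left hφ h0.le
        _ = ∑ x ∈ Lam n, |coordN n x φ| := by field_simp
    have hfφ : f φ = Real.exp (∑ x ∈ Lam n, |coordN n x φ|) := by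
      show (∏ i : ↥(Lam n), Real.exp |φ i|) = _
      rw [← Real.exp_sum, sum_coord]
    rw [hfφ]
    exact Real.exp_le_exp.mpr hS
  have hmeas_le : (μ {φ : Conf n | A ≤ ((n : ℝ) - 1)⁻¹ * ∑ x ∈ Lam n, |coordN n x φ|}).toReal
      ≤ (μ {φ | Real.exp (((n:ℝ)-1)*A) ≤ f φ}).toReal :=
    ENNReal.toReal_mono (measure_ne_top μ _) (measure_mono hsub)
  have hI : ∫ φ, f φ ∂μ ≤ c ^ (n-1) := by
    rw [hf, hμ, prod_integral_exp_abs n m]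
    calc ∏ i : ↥(Lam n), ∫ x, Real.exp |x| ∂(gaussianReal (m i) 1)
        ≤ ∏ _i : ↥(Lam n), c :=
          Finset.prod_le_prod
            (fun i _ => integral_nonneg fun x => (Real.exp_pos _).le)
            (fun i _ => integral_exp_abs_gauss_le (m i) M (hM i i.2))
      _ = c ^ (n-1) := by rw [Finset.prod_const, card_lam]
  have hcastn : ((n-1 : ℕ) : ℝ) = (n:ℝ) - 1 := by
    have : 1 ≤ n := by omega
    push_cast [this]
    ring
  have hce : Real.exp (((n:ℝ)-1)*A)
      * Real.exp (((n:ℝ)-1) * (Real.log c - A)) = c ^ (n-1) := by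
    rw [← Real.exp_add, ← Real.exp_log hcpos, ← Real.exp_nat_mul, hcastn, Real.log_exp]
    congr 1
    ring
  have hεpos : 0 < Real.exp (((n:ℝ)-1)*A) := Real.exp_pos _
  have hfinal : (μ {φ | Real.exp (((n:ℝ)-1)*A) ≤ f φ}).toReal
      ≤ Real.exp (((n:ℝ)-1) * (Real.log c - A)) := by
    rw [← mul_le_mul_iff_right₀ hεpos, hce]
    exact le_trans markov hI
  exact le_trans hmeas_le hfinal

open ProbabilityTheory in
lemma measure_pos (A : ℝ) (n : ℕ) (hn : 2 ≤ n) (m : ℕ → ℝ) :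
    0 < ((gaussianProduct n m)
        {φ : Conf n | A ≤ ((n : ℝ) - 1)⁻¹ * ∑ x ∈ Lam n, |coordN n x φ|}).toReal := by
  haveI := gaussianProduct_isProb n m
  refine ENNReal.toReal_pos ?_ (measure_ne_top _ _)
  have hn1 : (1:ℝ) ≤ (n:ℝ) - 1 := by
    have h2 : (2:ℝ) ≤ (n:ℝ) := by exact_mod_cast hn
    linarith
  have h0 : (0:ℝ) < (n:ℝ) - 1 := by linarith
  have hsub : (Set.univ.pi fun _ : ↥(Lam n) => Set.Ici |A|)
      ⊆ {φ : Conf n | A ≤ ((n : ℝ) - 1)⁻¹ * ∑ x ∈ Lam n, |coordN n x φ|} := by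
    intro φ hφ
    simp only [Set.mem_pi, Set.mem_univ, forall_true_left, Set.mem_Ici] at hφ
    simp only [Set.mem_setOf_eq]
    have hcard := card_lam n
    have hsum : ((n:ℝ)-1) * |A| ≤ ∑ i : ↥(Lam n), |φ i| := by
      have hle := Finset.card_nsmul_le_sum (Finset.univ : Finset ↥(Lam n))
        (fun i => |φ i|) |A| (fun i _ => le_trans (hφ i) (le_abs_self _))
      rw [hcard, nsmul_eq_mul] at hle
      have hcast : ((n-1 : ℕ) : ℝ) = (n:ℝ) - 1 := by
        have : 1 ≤ n := by omega
        push_cast [this]; ring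
      rwa [hcast] at hle
    calc A ≤ |A| := le_abs_self A
      _ = ((n:ℝ)-1)⁻¹ * (((n:ℝ)-1) * |A|) := by field_simp
      _ ≤ ((n:ℝ)-1)⁻¹ * ∑ x ∈ Lam n, |coordN n x φ| := by
          rw [sum_coord]
          exact mul_le_mul_of_nonneg_left hsum (inv_nonneg.mpr h0.le)
  intro hzero
  have hle0 : gaussianProduct n m (Set.univ.pi fun _ : ↥(Lam n) => Set.Ici |A|) = 0 :=
    le_antisymm (hzero ▸ measure_mono hsub) (zero_le)
  have hpi : gaussianProduct n m (Set.univ.pi fun _ : ↥(Lam n) => Set.Ici |A|)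
      = ∏ i : ↥(Lam n), gaussianReal (m i) 1 (Set.Ici |A|) := by
    rw [gaussianProduct, MeasureTheory.Measure.pi_pi]
  rw [hpi] at hle0
  have hne := Finset.prod_ne_zero_iff.mpr
    (fun (i : ↥(Lam n)) (_ : i ∈ (Finset.univ : Finset ↥(Lam n))) =>
      gauss_Ici_ne_zero (m (i : ℕ)) |A|)
  exact hne hle0


/-- Exponential tightness of the empirical mean of `|φ(x)|` under the
non-equilibrium steady state: the iterated `limsup` (in `A`, then in `n`) of
`(1/n) log μ_ss^n( (1/(n−1)) ∑ |φ(x)| ≥ A )` is `−∞`. -/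
theorem NESS_exponential_tightness
    (γ Φl Φr : ℝ) (hγ : γ ∈ Set.Ioo (1:ℝ) 2)
    (ψ : ℕ → ℕ → ℝ) (hψ : ∀ n : ℕ, 2 ≤ n → IsDiscreteProfile γ Φl Φr n (ψ n)) :
    Filter.limsup (fun A : ℝ =>
        Filter.limsup (fun n : ℕ =>
          (((n : ℝ)⁻¹ * Real.log ((gaussianProduct n (ψ n))
              {φ : Conf n | A ≤ ((n : ℝ) - 1)⁻¹ * ∑ x ∈ Lam n, |coordN n x φ|}).toReal
            : ℝ) : EReal))
          atTop)
      atTop = (⊥ : EReal) := by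
  obtain ⟨hγ1, -⟩ := hγ
  set M0 := max |Φl| |Φr| with hM0
  have hM0nn : 0 ≤ M0 := le_trans (abs_nonneg _) (le_max_left _ _)
  set CC := Real.log (2 * Real.exp (M0 + 1/2)) with hCC
  set G : ℝ → ℕ → EReal := fun A n =>
    (((n : ℝ)⁻¹ * Real.log ((gaussianProduct n (ψ n))
        {φ : Conf n | A ≤ ((n : ℝ) - 1)⁻¹ * ∑ x ∈ Lam n, |coordN n x φ|}).toReal
      : ℝ) : EReal) with hG
  have main : ∀ A : ℝ, CC ≤ A → ∀ n : ℕ, 2 ≤ n → G A n ≤ (((CC - A)/2 : ℝ) : EReal) := by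
    intro A hA n hn
    rw [hG, EReal.coe_le_coe_iff]
    have hpos := measure_pos A n hn (ψ n)
    have hle := measure_bound A n hn (ψ n) M0 hM0nn (profile_abs_le hγ1 hn (hψ n hn))
    have hlog : Real.log ((gaussianProduct n (ψ n))
        {φ : Conf n | A ≤ ((n : ℝ) - 1)⁻¹ * ∑ x ∈ Lam n, |coordN n x φ|}).toReal
        ≤ ((n:ℝ)-1) * (CC - A) := by
      calc Real.log _ ≤ Real.log (Real.exp (((n:ℝ)-1)*(CC - A))) :=
            Real.log_le_log hpos hle
        _ = ((n:ℝ)-1) * (CC - A) := Real.log_exp _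
    have hn2 : (2:ℝ) ≤ (n:ℝ) := by exact_mod_cast hn
    have hnpos : (0:ℝ) < (n:ℝ) := by linarith
    have hCA : CC - A ≤ 0 := by linarith
    have h1 : ((n:ℝ))⁻¹ * Real.log ((gaussianProduct n (ψ n))
        {φ : Conf n | A ≤ ((n : ℝ) - 1)⁻¹ * ∑ x ∈ Lam n, |coordN n x φ|}).toReal
        ≤ ((n:ℝ))⁻¹ * (((n:ℝ)-1) * (CC-A)) :=
      mul_le_mul_of_nonneg_left hlog (inv_nonneg.mpr hnpos.le)
    have h2 : ((n:ℝ))⁻¹ * (((n:ℝ)-1) * (CC-A)) ≤ (CC - A)/2 := by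
      rw [inv_mul_le_iff₀ hnpos]
      nlinarith [mul_nonneg (by linarith : (0:ℝ) ≤ A - CC) (by linarith : (0:ℝ) ≤ (n:ℝ)/2 - 1)]
    linarith
  have htend : Tendsto (fun A : ℝ => Filter.limsup (G A) atTop) atTop (nhds (⊥ : EReal)) := by
    rw [EReal.tendsto_nhds_bot_iff_real]
    intro M
    filter_upwards [eventually_ge_atTop (max CC (CC - 2*M + 2))] with A hA
    have hA1 : CC ≤ A := le_trans (le_max_left _ _) hA
    have hA2 : CC - 2*M + 2 ≤ A := le_trans (le_max_right _ _) hA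
    have hlim : Filter.limsup (G A) atTop ≤ (((CC - A)/2 : ℝ) : EReal) := by
      refine Filter.limsup_le_of_le Filter.isCobounded_le_of_bot ?_
      filter_upwards [eventually_ge_atTop 2] with n hn
      exact main A hA1 n hn
    refine lt_of_le_of_lt hlim ?_
    have : (CC - A)/2 < M := by linarith
    exact_mod_cast this
  exact htend.limsup_eq
end
end

section
/- Fix M ≥ 0, r > 1 and K_r > 0. For each n ≥ 2 let ν_n be the standard Gaussian product measure on ℝ^{Λ_n} (coordinates i.i.d. N(0,1)), let μ'_n be a Gaussian product measure on ℝ^{Λ_n} with unit variances and means m_n(x) satisfying |m_n(x)| ≤ M for all n and x ∈ Λ_n, and let μ_n be a probability measure on ℝ^{Λ_n}, absolutely continuous with respect to ν_n, with ∫ (dμ_n/dν_n)^r dν_n ≤ e^{K_r n}. Then for every q ∈ (1, r) there exists a constant κ_q > 0 (depending only on q, r, K_r and M) such that for all n ≥ 2: ∫ (dμ_n/dμ'_n)^q dμ'_n ≤ e^{κ_q n} and ∫ (dμ'_n/dν_n)^q dν_n ≤ e^{κ_q n}. -/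
open MeasureTheory Filter ENNReal NNReal
open ProbabilityTheory Real MeasureTheory.Measure

noncomputable section

theorem lintegral_fin_pi_prod {n : ℕ} (μ : Fin n → Measure ℝ) [∀ i, SigmaFinite (μ i)]
    (f : Fin n → ℝ → ℝ≥0∞) (hf : ∀ i, Measurable (f i)) :
    ∫⁻ x : Fin n → ℝ, ∏ i, f i (x i) ∂Measure.pi μ = ∏ i, ∫⁻ y, f i y ∂(μ i) := by
  induction n with
  | zero => simp [Measure.pi_of_empty]
  | succ n ih =>
    rw [← ((measurePreserving_piFinSuccAbove μ 0).symm).lintegral_comp_emb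
      (MeasurableEquiv.piFinSuccAbove (fun _ => ℝ) 0).symm.measurableEmbedding]
    simp_rw [MeasurableEquiv.piFinSuccAbove_symm_apply, Fin.insertNthEquiv,
      Fin.prod_univ_succ, Fin.insertNth_zero]
    simp only [Fin.zero_succAbove, Function.comp_def, Fin.cons_zero, Fin.cons_succ,
      Equiv.coe_fn_mk, cast_eq]
    have hmeas : Measurable fun y : Fin n → ℝ => ∏ i : Fin n, f i.succ (y i) :=
      Finset.measurable_prod _ fun i _ => (hf i.succ).comp (measurable_pi_apply i)
    rw [lintegral_prod_mul (hf 0).aemeasurable hmeas.aemeasurable,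
      ih (fun i => μ i.succ) (fun i => f i.succ) (fun i => hf i.succ)]

theorem lintegral_pi_prod {ι : Type*} [Fintype ι] (μ : ι → Measure ℝ) [∀ i, SigmaFinite (μ i)]
    (f : ι → ℝ → ℝ≥0∞) (hf : ∀ i, Measurable (f i)) :
    ∫⁻ x : ι → ℝ, ∏ i, f i (x i) ∂Measure.pi μ = ∏ i, ∫⁻ y, f i y ∂(μ i) := by
  let e := (Fintype.equivFin ι).symm
  rw [← (measurePreserving_piCongrLeft (fun i => μ i) e).lintegral_comp_emb
    (MeasurableEquiv.piCongrLeft (fun _ => ℝ) e).measurableEmbedding]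
  simp_rw [← e.prod_comp, MeasurableEquiv.coe_piCongrLeft, Equiv.piCongrLeft_apply_apply]
  exact lintegral_fin_pi_prod _ _ (fun j => hf _)

theorem gaussianPDF_mul_tilt (c y : ℝ) :
    gaussianPDF 0 1 y * ENNReal.ofReal (rexp (c * y - c ^ 2 / 2)) = gaussianPDF c 1 y := by
  rw [gaussianPDF, gaussianPDF, ← ENNReal.ofReal_mul (gaussianPDFReal_nonneg _ _ _)]
  congr 1
  simp only [gaussianPDFReal, NNReal.coe_one, mul_one]
  rw [mul_assoc, ← Real.exp_add]
  congr 1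
  ring

theorem gaussianReal_tilt (c : ℝ) :
    gaussianReal c 1 = (gaussianReal 0 1).withDensity
      (fun y => ENNReal.ofReal (rexp (c * y - c ^ 2 / 2))) := by
  rw [gaussianReal_of_var_ne_zero _ one_ne_zero, gaussianReal_of_var_ne_zero _ one_ne_zero,
    ← withDensity_mul _ (measurable_gaussianPDF _ _)
      (by exact (measurable_exp.comp ((measurable_id.const_mul c).sub_const _)).ennreal_ofReal)]
  congr 1
  ext y
  exact (gaussianPDF_mul_tilt c y).symm

theorem lintegral_tilt_one (c : ℝ) :
    ∫⁻ y, ENNReal.ofReal (rexp (c * y - c ^ 2 / 2)) ∂(gaussianReal 0 1) = 1 := by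
  have h := gaussianReal_tilt c
  have : (gaussianReal c 1) Set.univ = 1 := measure_univ
  rw [h, withDensity_apply _ MeasurableSet.univ, setLIntegral_univ] at this
  exact this

noncomputable def tiltFun (n : ℕ) (c : ℕ → ℝ) (φ : Conf n) : ℝ≥0∞ :=
  ENNReal.ofReal (rexp (∑ x : ↥(Lam n), (c x * φ x - (c x)^2/2)))

theorem measurable_tiltFun (n : ℕ) (c : ℕ → ℝ) : Measurable (tiltFun n c) := by
  apply Measurable.ennreal_ofReal
  apply measurable_exp.comp
  exact Finset.measurable_sum _ fun x _ =>
    by fun_prop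

theorem tiltFun_prod (n : ℕ) (c : ℕ → ℝ) (φ : Conf n) :
    tiltFun n c φ = ∏ x : ↥(Lam n), ENNReal.ofReal (rexp ((c x) * φ x - (c x)^2/2)) := by
  rw [tiltFun, Real.exp_sum, ENNReal.ofReal_prod_of_nonneg (fun i _ => (Real.exp_pos _).le)]

theorem tiltFun_ne_zero (n : ℕ) (c : ℕ → ℝ) (φ : Conf n) : tiltFun n c φ ≠ 0 := by
  simp [tiltFun, ENNReal.ofReal_eq_zero, not_le, Real.exp_pos]

theorem tiltFun_ne_top (n : ℕ) (c : ℕ → ℝ) (φ : Conf n) : tiltFun n c φ ≠ ⊤ :=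
  ENNReal.ofReal_ne_top

theorem gaussianProduct_eq (n : ℕ) (c : ℕ → ℝ) :
    gaussianProduct n c = (gaussianProduct n fun _ => 0).withDensity (tiltFun n c) := by
  rw [gaussianProduct, gaussianProduct]
  refine Measure.pi_eq fun s hs => ?_
  rw [withDensity_apply _ (MeasurableSet.univ_pi hs),
    ← lintegral_indicator (MeasurableSet.univ_pi hs)]
  have hind : ∀ φ : Conf n, (Set.univ.pi s).indicator (tiltFun n c) φ
      = ∏ x : ↥(Lam n),
        (s x).indicator (fun y => ENNReal.ofReal (rexp ((c x) * y - (c x)^2/2))) (φ x) := by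
    intro φ
    by_cases h : φ ∈ Set.univ.pi s
    · rw [Set.indicator_of_mem h, tiltFun_prod]
      exact Finset.prod_congr rfl fun x _ =>
        (Set.indicator_of_mem (h x (Set.mem_univ x))
          (fun y => ENNReal.ofReal (rexp ((c x) * y - (c x)^2/2)))).symm
    · rw [Set.indicator_of_notMem h]
      obtain ⟨x, hx⟩ : ∃ x, φ x ∉ s x := by by_contra! hc; exact h fun x _ => hc x
      exact (Finset.prod_eq_zero (Finset.mem_univ x)
        (by rw [Set.indicator_of_notMem hx])).symm
  have hfm : ∀ x : ↥(Lam n), Measurable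
      ((s x).indicator (fun y => ENNReal.ofReal (rexp ((c x) * y - (c x)^2/2)))) := fun x =>
    Measurable.indicator (by fun_prop) (hs x)
  rw [lintegral_congr hind, lintegral_pi_prod _ _ hfm]
  refine Finset.prod_congr rfl fun x _ => ?_
  rw [lintegral_indicator (hs x), ← withDensity_apply _ (hs x), ← gaussianReal_tilt]

theorem lintegral_tiltFun (n : ℕ) (c : ℕ → ℝ) :
    ∫⁻ φ, tiltFun n c φ ∂(gaussianProduct n fun _ => 0) = 1 := by
  rw [gaussianProduct]
  simp_rw [tiltFun_prod]
  rw [lintegral_pi_prod _ (fun (x : ↥(Lam n)) (y : ℝ) => ENNReal.ofReal (rexp ((c x) * y - (c x)^2/2)))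
    (fun x => by fun_prop)]
  simp [lintegral_tilt_one]

theorem lintegral_tiltFun_rpow (n : ℕ) (c : ℕ → ℝ) (t : ℝ) :
    ∫⁻ φ, (tiltFun n c φ) ^ t ∂(gaussianProduct n fun _ => 0)
      = ENNReal.ofReal (rexp ((t^2 - t) / 2 * ∑ x : ↥(Lam n), (c x)^2)) := by
  have hpt : ∀ φ : Conf n, (tiltFun n c φ) ^ t
      = ENNReal.ofReal (rexp ((t^2 - t) / 2 * ∑ x : ↥(Lam n), (c x)^2))
        * tiltFun n (fun k => t * c k) φ := by
    intro φ
    rw [tiltFun, tiltFun, ENNReal.ofReal_rpow_of_pos (Real.exp_pos _), ← Real.exp_mul,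
      ← ENNReal.ofReal_mul (Real.exp_pos _).le, ← Real.exp_add]
    congr 1
    rw [Real.exp_eq_exp, Finset.sum_mul, Finset.mul_sum, ← Finset.sum_add_distrib]
    exact Finset.sum_congr rfl fun x _ => by ring
  simp_rw [hpt]
  rw [lintegral_const_mul _ (measurable_tiltFun _ _), lintegral_tiltFun, mul_one]


set_option maxHeartbeats 1000000

/-- Relative-moment bounds: if `μ_n` has an `r`-th moment bound for its
density with respect to the standard Gaussian product measure `ν_n`, then for every
`q ∈ (1,r)` the `q`-th moments of `dμ_n/dμ'_n` and of `dμ'_n/dν_n` grow at most like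
`e^{κ_q n}`, for any Gaussian product measures `μ'_n` with uniformly bounded means. -/
theorem relative_density_moment_bounds
    (M r Kr : ℝ) (hM : 0 ≤ M) (hr : 1 < r) (hKr : 0 < Kr)
    (m : ℕ → ℕ → ℝ) (hm : ∀ n : ℕ, ∀ x ∈ Lam n, |m n x| ≤ M)
    (μ : (n : ℕ) → Measure (Conf n)) (hprob : ∀ n, IsProbabilityMeasure (μ n))
    (hac : ∀ n, μ n ≪ gaussianProduct n fun _ => 0)
    (hmoment : ∀ n : ℕ, 2 ≤ n →
      (∫⁻ φ, ((μ n).rnDeriv (gaussianProduct n fun _ => 0) φ) ^ r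
          ∂(gaussianProduct n fun _ => 0)) ≤ ENNReal.ofReal (Real.exp (Kr * n)))
    (q : ℝ) (hq : 1 < q) (hqr : q < r) :
    ∃ κ : ℝ, 0 < κ ∧ ∀ n : ℕ, 2 ≤ n →
      ((∫⁻ φ, ((μ n).rnDeriv (gaussianProduct n (m n)) φ) ^ q
          ∂(gaussianProduct n (m n))) ≤ ENNReal.ofReal (Real.exp (κ * n))) ∧
      ((∫⁻ φ, ((gaussianProduct n (m n)).rnDeriv (gaussianProduct n fun _ => 0) φ) ^ q
          ∂(gaussianProduct n fun _ => 0)) ≤ ENNReal.ofReal (Real.exp (κ * n))) := by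
  have hq0 : (0:ℝ) < q := lt_trans one_pos hq
  have hr0 : (0:ℝ) < r := lt_trans one_pos hr
  have hrq : (0:ℝ) < r - q := sub_pos.2 hqr
  set t₂ : ℝ := (1 - q) * r / (r - q) with ht₂def
  have ht₂neg : t₂ ≤ 0 := by
    apply div_nonpos_of_nonpos_of_nonneg _ hrq.le
    exact mul_nonpos_of_nonpos_of_nonneg (by linarith) hr0.le
  have hqq : (0:ℝ) ≤ q^2 - q := by nlinarith
  have ht₂ : (0:ℝ) ≤ t₂^2 - t₂ := by nlinarith [sq_nonneg t₂]
  set a : ℝ := (q^2 - q)/2 * M^2 with hadef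
  set b : ℝ := (t₂^2 - t₂)/2 * M^2 with hbdef
  have ha : 0 ≤ a := by positivity
  have hb : 0 ≤ b := by positivity
  refine ⟨Kr + a + b, by linarith, fun n hn => ?_⟩
  haveI : ∀ c : ℕ → ℝ, IsProbabilityMeasure (gaussianProduct n c) := fun c => by
    rw [gaussianProduct]; infer_instance
  haveI := hprob n
  set ν : Measure (Conf n) := gaussianProduct n fun _ => 0 with hνdef
  set G : Conf n → ℝ≥0∞ := tiltFun n (m n) with hGdef
  have hG : Measurable G := measurable_tiltFun n (m n)
  have hμ'_eq : gaussianProduct n (m n) = ν.withDensity G := gaussianProduct_eq n (m n)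
  set S : ℝ := ∑ x : ↥(Lam n), (m n x)^2 with hSdef
  have hS0 : 0 ≤ S := Finset.sum_nonneg fun x _ => sq_nonneg _
  have hn0 : (0:ℝ) ≤ (n:ℝ) := Nat.cast_nonneg n
  have hS : S ≤ M^2 * n := by
    have hterm : ∀ x : ↥(Lam n), (m n x)^2 ≤ M^2 := fun x =>
      sq_le_sq' (abs_le.1 (hm n x x.2)).1 (abs_le.1 (hm n x x.2)).2
    calc S ≤ ∑ _x : ↥(Lam n), M^2 := Finset.sum_le_sum fun x _ => hterm x
    _ = (Fintype.card ↥(Lam n) : ℝ) * M^2 := by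
        rw [Finset.sum_const, nsmul_eq_mul, Finset.card_univ]
    _ ≤ (n:ℝ) * M^2 := by
        refine mul_le_mul_of_nonneg_right ?_ (sq_nonneg M)
        have : Fintype.card ↥(Lam n) ≤ n := by
          rw [Fintype.card_coe]
          simp only [Nat.card_Icc]
          omega
        exact_mod_cast this
    _ = M^2 * n := mul_comm _ _
  have hGq : ∫⁻ φ, (G φ) ^ t₂ ∂ν = ENNReal.ofReal (rexp ((t₂^2 - t₂)/2 * S)) := by
    rw [hGdef, hνdef]; exact lintegral_tiltFun_rpow n (m n) t₂
  have hGq2 : ∫⁻ φ, (G φ) ^ q ∂ν = ENNReal.ofReal (rexp ((q^2 - q)/2 * S)) := by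
    rw [hGdef, hνdef]; exact lintegral_tiltFun_rpow n (m n) q
  constructor
  · -- first bound
    set D : Conf n → ℝ≥0∞ := (μ n).rnDeriv ν with hDdef
    have hDmeas : Measurable D := Measure.measurable_rnDeriv _ _
    rw [hμ'_eq]
    have hrd : (μ n).rnDeriv (ν.withDensity G) =ᵐ[ν] fun φ => (G φ)⁻¹ * D φ :=
      Measure.rnDeriv_withDensity_right (μ n) ν hG.aemeasurable
        (ae_of_all _ (tiltFun_ne_zero n (m n))) (ae_of_all _ (tiltFun_ne_top n (m n)))
    rw [lintegral_withDensity_eq_lintegral_mul _ hG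
      ((Measure.measurable_rnDeriv _ _).pow_const _)]
    have hae : (G * fun φ => ((μ n).rnDeriv (ν.withDensity G) φ) ^ q)
        =ᵐ[ν] fun φ => (D φ) ^ q * (G φ) ^ (1 - q) := by
      filter_upwards [hrd] with φ h1
      simp only [Pi.mul_apply]
      rw [h1, ENNReal.mul_rpow_of_nonneg _ _ hq0.le, ENNReal.inv_rpow,
        sub_eq_add_neg, ENNReal.rpow_add _ _ (tiltFun_ne_zero n (m n) φ)
          (tiltFun_ne_top n (m n) φ), ENNReal.rpow_one, ENNReal.rpow_neg]
      ring
    rw [lintegral_congr_ae hae]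
    have hpq : (r/q).HolderConjugate (r/(r-q)) := by
      refine ⟨?_, div_pos hr0 hq0, div_pos hr0 hrq⟩
      rw [inv_div, inv_div]
      field_simp
      ring
    have hHolder := ENNReal.lintegral_mul_le_Lp_mul_Lq ν hpq
      (hDmeas.pow_const q).aemeasurable (hG.pow_const (1 - q)).aemeasurable
    have hfq : ∀ φ : Conf n, ((D φ) ^ q) ^ (r/q) = (D φ) ^ r := fun φ => by
      rw [← ENNReal.rpow_mul]
      congr 1
      field_simp
    have hgq : ∀ φ : Conf n, ((G φ) ^ (1-q)) ^ (r/(r-q)) = (G φ) ^ t₂ := fun φ => by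
      rw [← ENNReal.rpow_mul]
      congr 1
      rw [ht₂def]; ring
    have hmom : ∫⁻ φ, (D φ) ^ r ∂ν ≤ ENNReal.ofReal (rexp (Kr * n)) := by
      rw [hDdef, hνdef]; exact hmoment n hn
    calc ∫⁻ φ, (D φ) ^ q * (G φ) ^ (1 - q) ∂ν
        ≤ (∫⁻ φ, ((D φ) ^ q) ^ (r/q) ∂ν) ^ (1/(r/q))
          * (∫⁻ φ, ((G φ) ^ (1-q)) ^ (r/(r-q)) ∂ν) ^ (1/(r/(r-q))) := hHolder
      _ = (∫⁻ φ, (D φ) ^ r ∂ν) ^ (1/(r/q))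
          * (∫⁻ φ, (G φ) ^ t₂ ∂ν) ^ (1/(r/(r-q))) := by
          simp_rw [hfq, hgq]
      _ ≤ (ENNReal.ofReal (rexp (Kr * n))) ^ (1/(r/q))
          * (ENNReal.ofReal (rexp ((t₂^2 - t₂)/2 * S))) ^ (1/(r/(r-q))) := by
          rw [hGq]
          exact mul_le_mul' (ENNReal.rpow_le_rpow hmom (by positivity)) le_rfl
      _ ≤ ENNReal.ofReal (rexp ((Kr + a + b) * n)) := by
          rw [ENNReal.ofReal_rpow_of_pos (Real.exp_pos _),
            ENNReal.ofReal_rpow_of_pos (Real.exp_pos _), ← Real.exp_mul, ← Real.exp_mul,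
            ← ENNReal.ofReal_mul (Real.exp_pos _).le, ← Real.exp_add]
          refine ENNReal.ofReal_le_ofReal (Real.exp_le_exp.2 ?_)
          have hu : 1/(r/q) ≤ 1 := by
            rw [one_div_div]
            exact (div_le_one hr0).2 hqr.le
          have hv : 1/(r/(r-q)) ≤ 1 := by
            rw [one_div_div]
            exact (div_le_one hr0).2 (by linarith)
          have h1 : Kr * n * (1/(r/q)) ≤ Kr * n :=
            mul_le_of_le_one_right (by positivity) hu
          have hB0 : 0 ≤ (t₂^2 - t₂)/2 * S := by positivity
          have h2 : (t₂^2 - t₂)/2 * S * (1/(r/(r-q))) ≤ (t₂^2 - t₂)/2 * S :=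
            mul_le_of_le_one_right hB0 hv
          have h3 : (t₂^2 - t₂)/2 * S ≤ (t₂^2 - t₂)/2 * (M^2 * n) :=
            mul_le_mul_of_nonneg_left hS (by positivity)
          have h4 : (t₂^2 - t₂)/2 * (M^2 * n) = b * n := by rw [hbdef]; ring
          have h5 : 0 ≤ a * n := mul_nonneg ha hn0
          nlinarith
  · -- second bound
    have hrn2 : (gaussianProduct n (m n)).rnDeriv ν =ᵐ[ν] G := by
      rw [hμ'_eq]
      exact Measure.rnDeriv_withDensity _ hG
    have heq : ∫⁻ φ, ((gaussianProduct n (m n)).rnDeriv ν φ) ^ q ∂ν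
        = ∫⁻ φ, (G φ) ^ q ∂ν :=
      lintegral_congr_ae (hrn2.mono fun φ hφ => by simp only [hφ])
    rw [heq, hGq2]
    refine ENNReal.ofReal_le_ofReal (Real.exp_le_exp.2 ?_)
    have h3 : (q^2 - q)/2 * S ≤ (q^2 - q)/2 * (M^2 * n) :=
      mul_le_mul_of_nonneg_left hS (by positivity)
    have h4 : (q^2 - q)/2 * (M^2 * n) = a * n := by rw [hadef]; ring
    nlinarith [mul_nonneg hb hn0, mul_nonneg hKr.le hn0]
end
end
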